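/- arXiv:1109.6362 — 2 statements merged into one kernel-verified Lean document; each statement's English description precedes it below -/
import Mathlib

section
/- Let T be a complete discrete valuation ring. Then every nonzero element f of the power series ring T[[x]] whose coefficients are not all in the maximal ideal of T can be written as f = g·u, where g ∈ T[x] is a polynomial and u is a unit in T[[x]]. -/
open PowerSeries

namespace WeierstrassAux

variable {T : Type*} [CommRing T]

/-- Shift a power series down by `n`: drop the first `n` coefficients. -/
noncomputable def shiftN (n : ℕ) : PowerSeries T →ₗ[T] PowerSeries T where
  toFun h := PowerSeries.mk fun j => PowerSeries.coeff (R := T) (j + n) h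
  map_add' := by intro a b; ext j; simp
  map_smul' := by intro r a; ext j; simp

@[simp] lemma coeff_shiftN (n j : ℕ) (h : PowerSeries T) :
    PowerSeries.coeff (R := T) j (shiftN n h) = PowerSeries.coeff (R := T) (j + n) h := by
  simp [shiftN]

lemma shiftN_X_pow_mul (n : ℕ) (a : PowerSeries T) : shiftN n (X ^ n * a) = a := by
  ext j
  simp [coeff_X_pow_mul]

lemma trunc_add_shiftN (n : ℕ) (h : PowerSeries T) :
    ((PowerSeries.trunc n h : Polynomial T) : PowerSeries T) + X ^ n * shiftN n h = h := by
  ext j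
  rw [map_add, Polynomial.coeff_coe, PowerSeries.coeff_trunc, PowerSeries.coeff_X_pow_mul']
  by_cases h1 : j < n
  · have h2 : ¬ n ≤ j := by omega
    rw [if_pos h1, if_neg h2, add_zero]
  · have h2 : n ≤ j := by omega
    rw [if_neg h1, if_pos h2, zero_add, coeff_shiftN, Nat.sub_add_cancel h2]

lemma coeff_mul_mem {I : Ideal T} {a b : PowerSeries T} {K : ℕ}
    (ha : ∀ i, PowerSeries.coeff (R := T) i a ∈ I) (hb : ∀ i, PowerSeries.coeff (R := T) i b ∈ I ^ K)
    (j : ℕ) : PowerSeries.coeff (R := T) j (a * b) ∈ I ^ (K + 1) := by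
  rw [PowerSeries.coeff_mul]
  refine Ideal.sum_mem _ fun p _ => ?_
  rw [pow_succ']
  exact Ideal.mul_mem_mul (ha _) (hb _)

lemma coeff_mul_mem' {I : Ideal T} {a b : PowerSeries T} {K : ℕ}
    (hb : ∀ i, PowerSeries.coeff (R := T) i b ∈ I ^ K)
    (j : ℕ) : PowerSeries.coeff (R := T) j (a * b) ∈ I ^ K := by
  rw [PowerSeries.coeff_mul]
  exact Ideal.sum_mem _ fun p _ => Ideal.mul_mem_left _ _ (hb _)

end WeierstrassAux

open WeierstrassAux

/-- **Weierstrass Preparation** (algebraic form): if `T` is a complete discrete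
valuation ring, then every nonzero power series `f ∈ T[[x]]` having some
coefficient that is a unit of `T` factors as `f = g·u` with `g` a polynomial
and `u` a unit of `T[[x]]`. -/
theorem weierstrass_preparation_powerSeries
    (T : Type*) [CommRing T] [IsDomain T] [IsDiscreteValuationRing T]
    [IsAdicComplete (IsLocalRing.maximalIdeal T) T]
    (f : PowerSeries T) (hf : f ≠ 0)
    (hcoeff : ∃ i : ℕ, IsUnit (PowerSeries.coeff (R := T) i f)) :
    ∃ (g : Polynomial T) (u : (PowerSeries T)ˣ),
      f = (g : PowerSeries T) * (u : PowerSeries T) := by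
  classical
  set m : Ideal T := IsLocalRing.maximalIdeal T with hm
  have hsmul : ∀ K : ℕ, (m ^ K • ⊤ : Submodule T T) = m ^ K := fun K => by
    rw [smul_eq_mul, Ideal.mul_top]
  set n := Nat.find hcoeff with hn
  have hunit : IsUnit (PowerSeries.coeff (R := T) n f) := Nat.find_spec hcoeff
  have hmem : ∀ i < n, PowerSeries.coeff (R := T) i f ∈ m := by
    intro i hi
    exact Nat.find_min hcoeff hi
  -- decompose f
  set f₁ : PowerSeries T := shiftN n f with hf₁
  have hconst : PowerSeries.constantCoeff (R := T) f₁ = PowerSeries.coeff (R := T) n f := by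
    rw [← PowerSeries.coeff_zero_eq_constantCoeff_apply]; simp [hf₁]
  have hUf₁ : IsUnit (PowerSeries.constantCoeff (R := T) f₁) := hconst ▸ hunit
  set U : Tˣ := hUf₁.unit with hU
  set f₁inv : PowerSeries T := PowerSeries.invOfUnit f₁ U with hfinv
  have hf₁mul : f₁ * f₁inv = 1 := PowerSeries.mul_invOfUnit f₁ U hUf₁.unit_spec.symm
  set c : PowerSeries T := ((PowerSeries.trunc n f : Polynomial T) : PowerSeries T) * f₁inv
    with hc
  have hcmem : ∀ j, PowerSeries.coeff (R := T) j c ∈ m := by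
    intro j
    rw [hc, PowerSeries.coeff_mul]
    refine Ideal.sum_mem _ fun p _ => Ideal.mul_mem_right _ _ ?_
    rw [Polynomial.coeff_coe, PowerSeries.coeff_trunc]
    split
    · exact hmem _ ‹_›
    · exact zero_mem _
  -- iterates A k = M^k(1) where M q = shiftN n (c * q)
  set A : ℕ → PowerSeries T := fun k => (fun q => shiftN n (c * q))^[k] 1 with hA
  have hA0 : A 0 = 1 := rfl
  have hAsucc : ∀ k, A (k + 1) = shiftN n (c * A k) := by
    intro k
    have := Function.iterate_succ_apply' (fun q => shiftN n (c * q)) k (1 : PowerSeries T)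
    simpa [hA] using this
  have hAmem : ∀ k j, PowerSeries.coeff (R := T) j (A k) ∈ m ^ k := by
    intro k
    induction k with
    | zero => intro j; simp
    | succ k ih =>
      intro j
      rw [hAsucc, coeff_shiftN]
      exact coeff_mul_mem hcmem ih _
  -- partial sums
  set S : ℕ → PowerSeries T := fun K => ∑ k ∈ Finset.range K, ((-1 : T) ^ k) • A k with hS
  have hSsucc : ∀ K, S (K + 1) = S K + ((-1 : T) ^ K) • A K := fun K => by
    rw [hS]; exact Finset.sum_range_succ _ _
  have htermmem : ∀ k j, PowerSeries.coeff (R := T) j (((-1 : T) ^ k) • A k) ∈ m ^ k := by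
    intro k j
    rw [map_smul, smul_eq_mul]
    exact Ideal.mul_mem_left _ _ (hAmem k j)
  have hSdiff : ∀ K K' : ℕ, K ≤ K' → ∀ j,
      PowerSeries.coeff (R := T) j (S K' - S K) ∈ m ^ K := by
    intro K K' hKK' j
    have hsplit : S K + ∑ k ∈ Finset.Ico K K', ((-1 : T) ^ k) • A k = S K' := by
      rw [hS]
      simp only [Finset.range_eq_Ico]
      exact Finset.sum_Ico_consecutive _ (Nat.zero_le K) hKK'
    rw [← hsplit, add_sub_cancel_left, map_sum]
    refine Ideal.sum_mem _ fun k hk => ?_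
    exact Ideal.pow_le_pow_right (Finset.mem_Ico.mp hk).1 (htermmem k j)
  -- the limit p
  have hprec : ∀ j : ℕ, ∃ L : T, ∀ K : ℕ,
      PowerSeries.coeff (R := T) j (S K) ≡ L [SMOD (m ^ K • ⊤ : Submodule T T)] := by
    intro j
    refine IsPrecomplete.prec (IsAdicComplete.toIsPrecomplete) ?_
    intro K K' hKK'
    rw [SModEq.sub_mem, hsmul]
    have h2 := hSdiff K K' hKK' j
    rw [map_sub] at h2
    simpa [neg_sub] using neg_mem h2
  choose L hL using hprec
  set p : PowerSeries T := PowerSeries.mk L with hp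
  have hpS : ∀ j K, PowerSeries.coeff (R := T) j (p - S K) ∈ m ^ K := by
    intro j K
    have := (hL j K)
    rw [SModEq.sub_mem, hsmul] at this
    rw [map_sub]
    simpa [hp, neg_sub] using neg_mem this
  -- key identity for partial sums
  have hkey : ∀ K, S K + shiftN n (c * S K) = 1 - ((-1 : T) ^ K) • A K := by
    intro K
    induction K with
    | zero => simp [hS, hA0]
    | succ K ih =>
      rw [hSsucc, mul_add, map_add, mul_smul_comm, map_smul, ← hAsucc]
      have : S K + (-1 : T) ^ K • A K + (shiftN n (c * S K) + (-1 : T) ^ K • A (K + 1))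
          = (S K + shiftN n (c * S K)) + (-1 : T) ^ K • A K + (-1 : T) ^ K • A (K + 1) := by
        ring
      rw [this, ih]
      have hsign : ((-1 : T) ^ (K + 1)) • A (K + 1) = -(((-1 : T) ^ K) • A (K + 1)) := by
        rw [pow_succ, mul_smul, neg_one_smul, smul_neg]
      rw [hsign]
      ring
  -- p is the fixed point
  have hfix : p + shiftN n (c * p) = 1 := by
    have hDmem : ∀ j K, PowerSeries.coeff (R := T) j (p + shiftN n (c * p) - 1) ∈ m ^ K := by
      intro j K
      have hdecomp : p + shiftN n (c * p) - 1
          = (p - S K) + shiftN n (c * (p - S K)) + (S K + shiftN n (c * S K) - 1) := by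
        rw [mul_sub, map_sub]
        ring
      rw [hdecomp, map_add, map_add]
      refine Ideal.add_mem _ (Ideal.add_mem _ (hpS j K) ?_) ?_
      · rw [coeff_shiftN]
        exact coeff_mul_mem' (fun i => hpS i K) _
      · rw [hkey K]
        have : (1 : PowerSeries T) - ((-1 : T) ^ K) • A K - 1 = -(((-1 : T) ^ K) • A K) := by
          ring
        rw [this, map_neg]
        exact neg_mem (htermmem K j)
    have : p + shiftN n (c * p) - 1 = 0 := by
      ext j
      rw [map_zero]
      refine IsHausdorff.haus (I := m) (M := T) inferInstance _ fun K => ?_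
      rw [SModEq.zero, hsmul]
      exact hDmem j K
    exact sub_eq_zero.mp this
  -- p is a unit
  have hpunit : IsUnit p := by
    rw [PowerSeries.isUnit_iff_constantCoeff]
    have h1 : PowerSeries.coeff (R := T) 0 (p - S 1) ∈ m := by simpa using hpS 0 1
    have hS1 : PowerSeries.coeff (R := T) 0 (S 1) = 1 := by
      simp [hS, hA0]
    rw [map_sub, hS1] at h1
    rw [← PowerSeries.coeff_zero_eq_constantCoeff_apply]
    refine IsLocalRing.isUnit_of_mem_nonunits_one_sub_self _ ?_
    rw [← IsLocalRing.mem_maximalIdeal, ← hm]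
    have h2 := neg_mem h1
    simpa using h2
  have hfinvunit : IsUnit f₁inv := by
    rw [PowerSeries.isUnit_iff_constantCoeff, hfinv, PowerSeries.constantCoeff_invOfUnit]
    exact Units.isUnit _
  -- the unit w
  have hwunit : IsUnit (f₁inv * p) := hfinvunit.mul hpunit
  obtain ⟨W, hW⟩ := hwunit
  -- compute f * w
  have hfw : f * (f₁inv * p) = c * p + X ^ n * p := by
    conv_lhs => rw [← trunc_add_shiftN n f]
    have h2 : (((PowerSeries.trunc n f : Polynomial T) : PowerSeries T) + X ^ n * shiftN n f)
        * (f₁inv * p)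
        = ((PowerSeries.trunc n f : Polynomial T) : PowerSeries T) * f₁inv * p
          + X ^ n * (f₁ * f₁inv) * p := by rw [hf₁]; ring
    rw [h2, hf₁mul, hc]
    ring
  have hshift_fw : shiftN n (f * (f₁inv * p)) = 1 := by
    rw [hfw, map_add, shiftN_X_pow_mul, add_comm]
    exact hfix
  -- the polynomial g
  set g : Polynomial T := PowerSeries.trunc n (f * (f₁inv * p)) + Polynomial.X ^ n with hg
  have hgeq : (g : PowerSeries T) = f * (f₁inv * p) := by
    conv_rhs => rw [← trunc_add_shiftN n (f * (f₁inv * p)), hshift_fw, mul_one]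
    rw [hg]
    push_cast
    rfl
  refine ⟨g, W⁻¹, ?_⟩
  have : f * (W : PowerSeries T) = (g : PowerSeries T) := by rw [hW, hgeq]
  calc f = f * ((W : PowerSeries T) * (W⁻¹ : (PowerSeries T)ˣ)) := by
        rw [Units.mul_inv, mul_one]
    _ = (f * (W : PowerSeries T)) * (W⁻¹ : (PowerSeries T)ˣ) := by ring
    _ = (g : PowerSeries T) * (W⁻¹ : (PowerSeries T)ˣ) := by rw [this]
end

section
/- Let K be a complete discretely valued field with residue field k of characteristic not 2, and let u(k) denote the u-invariant of k. Then u(K) = 2·u(k). In particular, if every anisotropic quadratic form over k has dimension ≤ m, then every anisotropic quadratic form over K has dimension ≤ 2m, and there exists an anisotropic form over K of dimension 2·u(k) whenever u(k) is finite. -/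
/-- A diagonal quadratic form `⟨a₁,…,aₙ⟩` with nonzero coefficients is
anisotropic if it has no nontrivial zero. -/
def IsAnisotropicDiag (k : Type*) [Field k] {n : ℕ} (a : Fin n → k) : Prop :=
  (∀ i, a i ≠ 0) ∧ ∀ x : Fin n → k, ∑ i, a i * x i ^ 2 = 0 → x = 0

/-- The `u`-invariant of a field: the supremum of the dimensions of anisotropic
(diagonal) quadratic forms over it. -/
noncomputable def uInvariant (k : Type*) [Field k] : ℕ∞ :=
  ⨆ (n : ℕ) (_ : ∃ a : Fin n → k, IsAnisotropicDiag k a), (n : ℕ∞)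

open IsLocalRing Finset Polynomial

section Aux

theorem aniso_of_equiv {F : Type*} [Field F] {ι : Type*} [Fintype ι] {n : ℕ} (e : ι ≃ Fin n)
    (a : ι → F) (h1 : ∀ i, a i ≠ 0)
    (h2 : ∀ x : ι → F, ∑ i, a i * x i ^ 2 = 0 → x = 0) :
    IsAnisotropicDiag F (a ∘ e.symm) := by
  refine ⟨fun i => h1 _, fun x hx => ?_⟩
  have hs : ∑ j : ι, a j * x (e j) ^ 2 = 0 := by
    rw [← hx]
    exact Fintype.sum_equiv e _ _ (fun j => by simp)
  have hz := h2 _ hs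
  funext i
  have := congrFun hz (e.symm i)
  simpa using this

theorem le_uInvariant {F : Type*} [Field F] {n : ℕ}
    (h : ∃ a : Fin n → F, IsAnisotropicDiag F a) : (n : ℕ∞) ≤ uInvariant F :=
  le_iSup₂ (f := fun (n : ℕ) (_ : ∃ a : Fin n → F, IsAnisotropicDiag F a) => (n : ℕ∞)) n h

variable {R : Type*} [CommRing R] [IsDomain R] [IsDiscreteValuationRing R]
variable [IsAdicComplete (IsLocalRing.maximalIdeal R) R]

/-- Hensel-lemma lifting of a nontrivial zero of a unit-coefficient diagonal form. -/
theorem hensel_sol (hchar : (2 : ResidueField R) ≠ 0)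
    {ι : Type*} [Fintype ι] (u : ι → R) (hu : ∀ i, IsUnit (u i))
    (y : ι → ResidueField R) (hy : y ≠ 0)
    (h : ∑ i, residue R (u i) * y i ^ 2 = 0) :
    ∃ x : ι → R, (∑ i, u i * x i ^ 2 = 0) ∧ ∃ j, IsUnit (x j) := by
  classical
  obtain ⟨j, hj'⟩ := Function.ne_iff.mp hy
  have hj : y j ≠ 0 := hj' 
  choose x₀ hx₀ using fun i => IsLocalRing.residue_surjective (R := R) (y i)
  set v := (hu j).unit with hv
  set S : R := ∑ i ∈ univ.erase j, u i * x₀ i ^ 2 with hS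
  set f : R[X] := X ^ 2 + C (((v⁻¹ : Rˣ) : R) * S) with hf
  have hmonic : f.Monic := monic_X_pow_add_C _ two_ne_zero
  have hsum0 : u j * x₀ j ^ 2 + S = ∑ i, u i * x₀ i ^ 2 :=
    Finset.add_sum_erase _ (fun i => u i * x₀ i ^ 2) (mem_univ j)
  have hmem : ∑ i, u i * x₀ i ^ 2 ∈ maximalIdeal R := by
    have : residue R (∑ i, u i * x₀ i ^ 2) = 0 := by
      rw [map_sum]
      have : ∀ i, residue R (u i * x₀ i ^ 2) = residue R (u i) * y i ^ 2 := by
        intro i; rw [map_mul, map_pow, hx₀]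
      simp_rw [this]; exact h
    exact Ideal.Quotient.eq_zero_iff_mem.mp this
  have hvuj : (v : R) = u j := (hu j).unit_spec
  have heval_eq : ∀ z : R, (v : R) * f.eval z = u j * z ^ 2 + S := by
    intro z
    simp only [hf, eval_add, eval_pow, eval_X, eval_C]
    rw [mul_add, Units.mul_inv_cancel_left, hvuj]
  have heval : f.eval (x₀ j) ∈ maximalIdeal R := by
    have h1 : f.eval (x₀ j) = ((v⁻¹ : Rˣ) : R) * (∑ i, u i * x₀ i ^ 2) := by
      rw [← hsum0, ← heval_eq, Units.inv_mul_cancel_left]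
    rw [h1]
    exact Ideal.mul_mem_left _ _ hmem
  have hder : IsUnit (Ideal.Quotient.mk (maximalIdeal R) (f.derivative.eval (x₀ j))) := by
    have hd : f.derivative = C 2 * X := by
      rw [hf]
      simp [derivative_X_pow]
      rw [one_add_one_eq_two, map_ofNat]
    have : (Ideal.Quotient.mk (maximalIdeal R)) (f.derivative.eval (x₀ j))
        = (2 : ResidueField R) * y j := by
      rw [hd]
      simp only [eval_mul, eval_C, eval_X, map_mul]
      rw [show ((Ideal.Quotient.mk (maximalIdeal R)) (x₀ j) : ResidueField R)
        = residue R (x₀ j) from rfl, hx₀]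
      norm_num
      rw [map_ofNat]
      rfl
    rw [this]
    exact (mul_ne_zero hchar hj).isUnit
  obtain ⟨a, hroot, hamem⟩ :=
    HenselianRing.is_henselian (I := maximalIdeal R) f hmonic (x₀ j) heval hder
  refine ⟨Function.update x₀ j a, ?_, j, ?_⟩
  · have hsum1 : ∑ i, u i * Function.update x₀ j a i ^ 2 = u j * a ^ 2 + S := by
      rw [← Finset.add_sum_erase _ (fun i => u i * Function.update x₀ j a i ^ 2) (mem_univ j)]
      rw [Function.update_self]
      congr 1
      exact Finset.sum_congr rfl fun i hi => by
        rw [Function.update_of_ne (Finset.ne_of_mem_erase hi)]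
    rw [hsum1, ← heval_eq, show eval a f = 0 from hroot, mul_zero]
  · have hres : residue R a = y j := by
      have : residue R a = residue R (x₀ j) :=
        Ideal.Quotient.eq.mpr hamem
      rw [this, hx₀]
    rw [Function.update_self]
    refine IsLocalRing.notMem_maximalIdeal.mp fun hmem' => ?_
    exact hj (by rw [← hres]; exact Ideal.Quotient.eq_zero_iff_mem.mpr hmem')

/-- A nonzero solution of a diagonal equation over a DVR can be replaced by a primitive one. -/
theorem primitive_sol {ι : Type*} [Fintype ι] {ϖ : R} (hϖ : Irreducible ϖ)
    (A : ι → R) {r : ι → R} (hr : r ≠ 0) (h : ∑ i, A i * r i ^ 2 = 0) :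
    ∃ s : ι → R, (∑ i, A i * s i ^ 2 = 0) ∧ ∃ j, ¬ ϖ ∣ s j := by
  classical
  obtain ⟨i0, hi0'⟩ := Function.ne_iff.mp hr
  have hi0 : r i0 ≠ 0 := hi0'
  have hspan : maximalIdeal R = Ideal.span {ϖ} :=
    (IsDiscreteValuationRing.irreducible_iff_uniformizer ϖ).mp hϖ
  have hex : ∃ n : ℕ, ¬ ϖ ^ n ∣ r i0 := by
    by_contra hall
    push_neg at hall
    refine hi0 (IsHausdorff.haus (inferInstance : IsHausdorff (maximalIdeal R) R)
      (r i0) fun n => ?_)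
    rw [SModEq.zero, smul_eq_mul, Ideal.mul_top, hspan, Ideal.span_singleton_pow,
      Ideal.mem_span_singleton]
    exact hall n
  obtain ⟨n, hn⟩ := hex
  clear hi0 hi0' hr
  induction n generalizing r with
  | zero => exact absurd (pow_zero ϖ ▸ one_dvd _) hn
  | succ n ih =>
    by_cases hall : ∀ j, ϖ ∣ r j
    · choose r' hr' using hall
      have e1 : ∑ i, A i * r i ^ 2 = ϖ ^ 2 * ∑ i, A i * r' i ^ 2 := by
        rw [Finset.mul_sum]
        exact Finset.sum_congr rfl fun i _ => by rw [hr' i]; ring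
      have hsum' : ∑ i, A i * r' i ^ 2 = 0 := by
        have := h
        rw [e1] at this
        exact (mul_eq_zero.mp this.symm.symm).resolve_left (pow_ne_zero _ hϖ.ne_zero)
      refine ih hsum' fun hdvd => hn ?_
      rw [hr' i0, pow_succ']
      exact mul_dvd_mul_left ϖ hdvd
    · push_neg at hall
      exact ⟨r, h, hall⟩

/-- Springer: lifting an anisotropic residue form to an anisotropic form of
doubled dimension over the fraction field. -/
theorem exists_aniso_frac {n : ℕ}
    (h : ∃ a : Fin n → ResidueField R, IsAnisotropicDiag (ResidueField R) a) :
    ∃ c : Fin (n + n) → FractionRing R, IsAnisotropicDiag (FractionRing R) c := by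
  classical
  obtain ⟨ab, hab1, hab2⟩ := h
  obtain ⟨ϖ, hϖ⟩ := IsDiscreteValuationRing.exists_irreducible R
  have hspan : maximalIdeal R = Ideal.span {ϖ} :=
    (IsDiscreteValuationRing.irreducible_iff_uniformizer ϖ).mp hϖ
  set K := FractionRing R
  have hinj : Function.Injective (algebraMap R K) := IsFractionRing.injective R (FractionRing R)
  choose a ha using fun i => IsLocalRing.residue_surjective (R := R) (ab i)
  have haunit : ∀ i, IsUnit (a i) := fun i => by
    refine IsLocalRing.notMem_maximalIdeal.mp fun hm => hab1 i ?_
    rw [← ha i]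
    exact Ideal.Quotient.eq_zero_iff_mem.mpr hm
  set d : Fin n ⊕ Fin n → R := Sum.elim a fun i => ϖ * a i with hd
  have hd0 : ∀ s, d s ≠ 0 := by
    rintro (i | i)
    · exact (haunit i).ne_zero
    · exact mul_ne_zero hϖ.ne_zero (haunit i).ne_zero
  set e := finSumFinEquiv (m := n) (n := n)
  refine ⟨fun i => algebraMap R K (d (e.symm i)), fun i => ?_, fun x hx => ?_⟩
  · exact (map_ne_zero_iff _ hinj).mpr (hd0 (e.symm i))
  · by_contra hx0
    set y : Fin n ⊕ Fin n → K := fun s => x (e s) with hy'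
    have hy : y ≠ 0 := by
      obtain ⟨i, hi⟩ := Function.ne_iff.mp hx0
      exact Function.ne_iff.mpr ⟨e.symm i, by simpa [hy'] using hi⟩
    have hsum : ∑ s : Fin n ⊕ Fin n, algebraMap R K (d s) * y s ^ 2 = 0 := by
      rw [← hx]
      exact Fintype.sum_equiv e _ _ fun s => by simp [hy']
    obtain ⟨b, hb⟩ := IsLocalization.exist_integer_multiples_of_finite
      (nonZeroDivisors R) y
    have hb' : ∀ s, ∃ t : R, algebraMap R K t = (b : R) • y s := fun s => hb s
    choose rr hrr using hb'
    have hbK : algebraMap R K (b : R) ≠ 0 :=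
      (map_ne_zero_iff _ hinj).mpr (nonZeroDivisors.ne_zero b.2)
    have hRsum : ∑ s, d s * rr s ^ 2 = 0 := by
      apply hinj
      rw [map_sum, map_zero]
      calc ∑ s, algebraMap R K (d s * rr s ^ 2)
          = algebraMap R K (b : R) ^ 2 * ∑ s, algebraMap R K (d s) * y s ^ 2 := by
            rw [Finset.mul_sum]
            refine Finset.sum_congr rfl fun s _ => ?_
            rw [map_mul, map_pow, hrr s, Algebra.smul_def]
            ring
        _ = 0 := by rw [hsum, mul_zero]
    have hrr0 : rr ≠ 0 := by
      obtain ⟨s0, hs0⟩ := Function.ne_iff.mp hy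
      refine Function.ne_iff.mpr ⟨s0, fun h0 => ?_⟩
      have h0' : rr s0 = 0 := h0
      have hs0' : y s0 ≠ 0 := hs0
      have : algebraMap R K (rr s0) = 0 := by rw [h0', map_zero]
      rw [hrr s0, Algebra.smul_def] at this
      exact (mul_ne_zero hbK hs0') this
    obtain ⟨s, hssum, j, hjdvd⟩ := primitive_sol hϖ d hrr0 hRsum
    -- split the solution
    set p : Fin n → R := fun i => s (Sum.inl i)
    set q : Fin n → R := fun i => s (Sum.inr i)
    have hsplit : (∑ i, a i * p i ^ 2) + ϖ * ∑ i, a i * q i ^ 2 = 0 := by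
      rw [← hssum, Fintype.sum_sum_type]
      congr 1
      rw [Finset.mul_sum]
      exact Finset.sum_congr rfl fun i _ => by simp [hd, p, q]; ring
    have hresϖ : residue R ϖ = 0 :=
      Ideal.Quotient.eq_zero_iff_mem.mpr (hspan ▸ Ideal.mem_span_singleton_self ϖ)
    have hdvd_of_sum : ∀ w : Fin n → R, (∑ i, a i * w i ^ 2) ∈ maximalIdeal R →
        ∀ i, ϖ ∣ w i := by
      intro w hw i
      have h0 : ∑ i, ab i * residue R (w i) ^ 2 = 0 := by
        have := Ideal.Quotient.eq_zero_iff_mem.mpr hw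
        rw [show (Ideal.Quotient.mk (maximalIdeal R)) (∑ i, a i * w i ^ 2)
          = residue R (∑ i, a i * w i ^ 2) from rfl, map_sum] at this
        refine Eq.trans ?_ this
        exact Finset.sum_congr rfl fun i _ => by rw [map_mul, map_pow, ha i]
      have := congrFun (hab2 _ h0) i
      rw [← Ideal.mem_span_singleton, ← hspan, ← Ideal.Quotient.eq_zero_iff_mem]
      exact this
    have hpdvd : ∀ i, ϖ ∣ p i := by
      refine hdvd_of_sum p ?_
      rw [eq_neg_of_add_eq_zero_left hsplit]
      exact neg_mem (Ideal.mul_mem_right _ _ (hspan ▸ Ideal.mem_span_singleton_self ϖ))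
    choose p' hp' using hpdvd
    have hP : ∑ i, a i * p i ^ 2 = ϖ * (ϖ * ∑ i, a i * p' i ^ 2) := by
      rw [Finset.mul_sum, Finset.mul_sum]
      exact Finset.sum_congr rfl fun i _ => by rw [hp' i]; ring
    have hsplit2 : ϖ * ((ϖ * ∑ i, a i * p' i ^ 2) + ∑ i, a i * q i ^ 2) = 0 := by
      rw [mul_add, ← hP]
      exact hsplit
    have hsplit3 : (ϖ * ∑ i, a i * p' i ^ 2) + ∑ i, a i * q i ^ 2 = 0 :=
      (mul_eq_zero.mp hsplit2).resolve_left hϖ.ne_zero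
    have hqdvd : ∀ i, ϖ ∣ q i := by
      refine hdvd_of_sum q ?_
      rw [eq_neg_of_add_eq_zero_right hsplit3]
      exact neg_mem (Ideal.mul_mem_right _ _ (hspan ▸ Ideal.mem_span_singleton_self ϖ))
    cases j with
    | inl i => exact hjdvd ⟨p' i, hp' i⟩
    | inr i => exact hjdvd (hqdvd i)

/-- Upper bound: any anisotropic diagonal form over the fraction field has
dimension at most twice the bound for the residue field. -/
theorem dim_le_two_mul (hchar : (2 : ResidueField R) ≠ 0) {m : ℕ}
    (hm : ∀ n : ℕ, (∃ a : Fin n → ResidueField R, IsAnisotropicDiag (ResidueField R) a) → n ≤ m)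
    {N : ℕ} (c : Fin N → FractionRing R) (hc : IsAnisotropicDiag (FractionRing R) c) :
    N ≤ m + m := by
  classical
  obtain ⟨ϖ, hϖ⟩ := IsDiscreteValuationRing.exists_irreducible R
  have hinj : Function.Injective (algebraMap R (FractionRing R)) := IsFractionRing.injective R (FractionRing R)
  have hϖK : algebraMap R (FractionRing R) ϖ ≠ 0 := (map_ne_zero_iff _ hinj).mpr hϖ.ne_zero
  have key : ∀ i, ∃ (v : Rˣ) (ε : ℕ) (σ : FractionRing R), ε ≤ 1 ∧ σ ≠ 0 ∧
      c i * σ ^ 2 = algebraMap R (FractionRing R) ↑v * algebraMap R (FractionRing R) ϖ ^ ε := by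
    intro i
    obtain ⟨r, sd, hsd, hrs⟩ := IsFractionRing.div_surjective (A := R) (c i)
    have hsd0 : sd ≠ 0 := nonZeroDivisors.ne_zero hsd
    have hsdK : algebraMap R (FractionRing R) sd ≠ 0 := (map_ne_zero_iff _ hinj).mpr hsd0
    have hr0 : r ≠ 0 := by
      rintro rfl
      rw [map_zero, zero_div] at hrs
      exact hc.1 i hrs.symm
    obtain ⟨p, u, hu⟩ := IsDiscreteValuationRing.eq_unit_mul_pow_irreducible hr0 hϖ
    obtain ⟨q, w, hw⟩ := IsDiscreteValuationRing.eq_unit_mul_pow_irreducible hsd0 hϖ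
    obtain ⟨t, ε, hε, hpqe⟩ : ∃ t ε : ℕ, ε ≤ 1 ∧ p + q = 2 * t + ε :=
      ⟨(p + q) / 2, (p + q) % 2, Nat.le_of_lt_succ (Nat.mod_lt _ (by norm_num)),
        (Nat.div_add_mod _ _).symm⟩
    have hB : (algebraMap R (FractionRing R) ϖ ^ t) ^ 2 ≠ 0 := pow_ne_zero _ (pow_ne_zero _ hϖK)
    refine ⟨u * w, ε, algebraMap R (FractionRing R) sd / algebraMap R (FractionRing R) ϖ ^ t, hε,
      div_ne_zero hsdK (pow_ne_zero _ hϖK), ?_⟩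
    have hci : c i * algebraMap R (FractionRing R) sd = algebraMap R (FractionRing R) r := by
      rw [← hrs, div_mul_cancel₀ _ hsdK]
    have hrs2 : r * sd = ↑(u * w) * ϖ ^ ε * (ϖ ^ t) ^ 2 := by
      calc r * sd = ↑u * ↑w * ϖ ^ (p + q) := by rw [hu, hw, pow_add]; ring
        _ = ↑(u * w) * ϖ ^ ε * (ϖ ^ t) ^ 2 := by
            rw [hpqe, pow_add, pow_mul]; push_cast; ring
    calc c i * (algebraMap R (FractionRing R) sd / algebraMap R (FractionRing R) ϖ ^ t) ^ 2
        = (c i * algebraMap R (FractionRing R) sd) * algebraMap R (FractionRing R) sd / (algebraMap R (FractionRing R) ϖ ^ t) ^ 2 := by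
          rw [div_pow]; ring
      _ = algebraMap R (FractionRing R) (r * sd) / (algebraMap R (FractionRing R) ϖ ^ t) ^ 2 := by rw [hci, ← map_mul]
      _ = algebraMap R (FractionRing R) ↑(u * w) * algebraMap R (FractionRing R) ϖ ^ ε := by
          rw [hrs2]
          simp only [map_mul, map_pow]
          exact mul_div_cancel_right₀ _ hB
  choose v ε σ hε hσ hcσ using key
  have main : ∀ (T : Finset (Fin N)) (e₀ : ℕ), (∀ i ∈ T, ε i = e₀) → T.card ≤ m := by
    intro T e₀ hTe
    have h1 : ∀ i : ↥T, residue R ((v ↑i : Rˣ) : R) ≠ 0 := fun i h0 =>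
      IsLocalRing.notMem_maximalIdeal.mpr (v ↑i).isUnit
        (Ideal.Quotient.eq_zero_iff_mem.mp h0)
    have h2 : ∀ yT : ↥T → ResidueField R,
        ∑ i : ↥T, residue R ((v ↑i : Rˣ) : R) * yT i ^ 2 = 0 → yT = 0 := by
      intro yT hyT
      by_contra hyT0
      obtain ⟨xR, hxRsum, j, hjunit⟩ := hensel_sol hchar (fun i : ↥T => ((v ↑i : Rˣ) : R))
        (fun i => (v ↑i).isUnit) yT hyT0 hyT
      set xR' : Fin N → R := fun i => if h : i ∈ T then xR ⟨i, h⟩ else 0 with hxR'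
      set x : Fin N → FractionRing R := fun i => σ i * algebraMap R (FractionRing R) (xR' i) with hx'
      have hTsum : ∑ i ∈ T, (((v i : Rˣ) : R) * xR' i ^ 2) = 0 := by
        rw [← Finset.sum_coe_sort T (fun i => (((v i : Rˣ) : R) * xR' i ^ 2))]
        rw [← hxRsum]
        exact Fintype.sum_congr _ _ fun i => by simp [hxR', i.2]
      have hxsum : ∑ i, c i * x i ^ 2 = 0 := by
        have step : ∑ i, c i * x i ^ 2 = ∑ i ∈ T, c i * x i ^ 2 :=
          (Finset.sum_subset (Finset.subset_univ T) fun i _ hiT => by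
            simp [hx', hxR', dif_neg hiT]).symm
        have step2 : ∀ i ∈ T, c i * x i ^ 2
            = algebraMap R (FractionRing R) ϖ ^ e₀ * algebraMap R (FractionRing R) (((v i : Rˣ) : R) * xR' i ^ 2) := by
          intro i hi
          have e3 : c i * x i ^ 2 = (c i * σ i ^ 2) * algebraMap R (FractionRing R) (xR' i) ^ 2 := by
            rw [hx']; ring
          rw [e3, hcσ i, hTe i hi, map_mul, map_pow]
          ring
        rw [step, Finset.sum_congr rfl step2, ← Finset.mul_sum, ← map_sum, hTsum,
          map_zero, mul_zero]
      have hzero := hc.2 x hxsum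
      have hxj : x ↑j ≠ 0 := by
        have e4 : xR' ↑j = xR j := by simp [hxR', j.2]
        rw [hx']
        exact mul_ne_zero (hσ _) ((map_ne_zero_iff _ hinj).mpr (e4 ▸ hjunit.ne_zero))
      exact hxj (by rw [hzero]; rfl)
    exact hm T.card ⟨_, aniso_of_equiv T.equivFin _ h1 h2⟩
  have hT0 : (univ.filter fun i => ε i = 0).card ≤ m :=
    main _ 0 fun i hi => (Finset.mem_filter.mp hi).2
  have hT1 : (univ.filter fun i => ¬ ε i = 0).card ≤ m := by
    refine main _ 1 fun i hi => ?_
    have h5 := (Finset.mem_filter.mp hi).2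
    have h6 := hε i
    omega
  have hcards := Finset.card_filter_add_card_filter_not
    (s := (univ : Finset (Fin N))) (p := fun i => ε i = 0)
  rw [Finset.card_univ, Fintype.card_fin] at hcards
  omega

end Aux

theorem eq_top_of_forall_le {x : ℕ∞} (h : ∀ n : ℕ, (n : ℕ∞) ≤ x) : x = ⊤ := by
  by_contra hx
  obtain ⟨m, rfl⟩ : ∃ m : ℕ, x = (m : ℕ∞) := ⟨x.toNat, (ENat.coe_toNat hx).symm⟩
  have := h (m + 1)
  exact absurd (by exact_mod_cast this) (by omega)

/-- **Springer's theorem**: for a complete discretely valued field `K` with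
residue field `k` of characteristic not 2, `u(K) = 2·u(k)`. -/
theorem uInvariant_complete_discretely_valued
    (R : Type*) [CommRing R] [IsDomain R] [IsDiscreteValuationRing R]
    [IsAdicComplete (IsLocalRing.maximalIdeal R) R]
    (hchar : (2 : IsLocalRing.ResidueField R) ≠ 0) :
    uInvariant (FractionRing R) = 2 * uInvariant (IsLocalRing.ResidueField R) := by
  classical
  have lift : ∀ n : ℕ,
      (∃ a : Fin n → IsLocalRing.ResidueField R,
        IsAnisotropicDiag (IsLocalRing.ResidueField R) a) →
      ((n : ℕ∞) + (n : ℕ∞) ≤ uInvariant (FractionRing R)) := by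
    intro n hn
    obtain ⟨c, hcan⟩ := exists_aniso_frac hn
    have h := le_uInvariant ⟨c, hcan⟩
    rw [Nat.cast_add] at h
    exact h
  rcases eq_or_ne (uInvariant (IsLocalRing.ResidueField R)) ⊤ with htop | hne
  · rw [htop, ENat.mul_top (by norm_num)]
    refine eq_top_of_forall_le fun N => ?_
    have hN : (N : ℕ∞) < uInvariant (IsLocalRing.ResidueField R) := by
      rw [htop]; exact ENat.coe_lt_top N
    rw [uInvariant, lt_iSup_iff] at hN
    obtain ⟨n, hn⟩ := hN
    rw [lt_iSup_iff] at hn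
    obtain ⟨hwit, hlt⟩ := hn
    have hle : (N : ℕ∞) ≤ (n : ℕ∞) := le_of_lt hlt
    calc (N : ℕ∞) ≤ (n : ℕ∞) + (n : ℕ∞) := le_trans hle (by exact_mod_cast Nat.le_add_right n n)
      _ ≤ uInvariant (FractionRing R) := lift n hwit
  · obtain ⟨m, hmeq⟩ : ∃ m : ℕ, uInvariant (IsLocalRing.ResidueField R) = (m : ℕ∞) :=
      ⟨_, (ENat.coe_toNat hne).symm⟩
    have hm : ∀ n : ℕ,
        (∃ a : Fin n → IsLocalRing.ResidueField R,
          IsAnisotropicDiag (IsLocalRing.ResidueField R) a) → n ≤ m := by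
      intro n hn
      have := le_uInvariant hn
      rw [hmeq] at this
      exact_mod_cast this
    have hwit_m : ∃ a : Fin m → IsLocalRing.ResidueField R,
        IsAnisotropicDiag (IsLocalRing.ResidueField R) a := by
      rcases Nat.eq_zero_or_pos m with rfl | hmpos
      · exact ⟨fun i => i.elim0, fun i => i.elim0, fun x hx => funext fun i => i.elim0⟩
      · have hlt : ((m - 1 : ℕ) : ℕ∞) < uInvariant (IsLocalRing.ResidueField R) := by
          rw [hmeq]
          exact_mod_cast Nat.sub_lt hmpos one_pos
        rw [uInvariant, lt_iSup_iff] at hlt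
        obtain ⟨n, hn⟩ := hlt
        rw [lt_iSup_iff] at hn
        obtain ⟨hwit, hlt'⟩ := hn
        have h1 : n ≤ m := hm n hwit
        have h2 : m - 1 < n := by exact_mod_cast hlt'
        have : n = m := by omega
        exact this ▸ hwit
    rw [hmeq]
    refine le_antisymm ?_ ?_
    · rw [uInvariant]
      refine iSup₂_le fun N hN => ?_
      obtain ⟨c, hcan⟩ := hN
      have := dim_le_two_mul hchar hm c hcan
      calc (N : ℕ∞) ≤ ((m + m : ℕ) : ℕ∞) := by exact_mod_cast this
        _ = 2 * (m : ℕ∞) := by push_cast; ring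
    · calc 2 * (m : ℕ∞) = (m : ℕ∞) + (m : ℕ∞) := two_mul _
        _ ≤ uInvariant (FractionRing R) := lift m hwit_m
end
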